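/- The gonality of the Ferrers rook graph of the Ferrers diagram with row lengths (4,3,1) equals 4. -/

import Mathlib

open Finset

open scoped Classical

/-- A divisor is effective if it is nonnegative everywhere. -/
def Effective {V : Type*} (D : V → ℤ) : Prop := ∀ v, 0 ≤ D v

/-- The degree of a divisor: the total number of chips. -/
def degD {V : Type*} [Fintype V] (D : V → ℤ) : ℤ := ∑ v, D v

/-- The effect on a vertex `w` of firing each vertex `u` with multiplicity `f u`. -/
noncomputable def lap {V : Type*} [Fintype V] (G : SimpleGraph V) (f : V → ℤ) (w : V) : ℤ :=
  (∑ u, f u * (if G.Adj u w then 1 else 0)) - f w * (∑ u, if G.Adj u w then (1 : ℤ) else 0)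

/-- Two divisors are (chip-firing) equivalent if one is obtained from the other by a
sequence of chip-firing moves, i.e. they differ by a Laplacian of some `f : V → ℤ`. -/
def LinEquiv {V : Type*} [Fintype V] (G : SimpleGraph V) (D D' : V → ℤ) : Prop :=
  ∃ f : V → ℤ, ∀ w, D' w = D w + lap G f w

/-- A divisor has positive rank if for every vertex there is an equivalent effective
divisor with a chip at that vertex. -/
def PositiveRank {V : Type*} [Fintype V] (G : SimpleGraph V) (D : V → ℤ) : Prop :=
  ∀ v, ∃ D', LinEquiv G D D' ∧ Effective D' ∧ 0 < D' v

/-- A Ferrers diagram: a finite subset of ℕ² with coordinates ≥ 1, closed under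
decreasing either coordinate toward 1. -/
def IsFerrers (F : Finset (ℕ × ℕ)) : Prop :=
  ∀ p ∈ F, 1 ≤ p.1 ∧ 1 ≤ p.2 ∧ (p.1 = 1 ∨ (p.1 - 1, p.2) ∈ F) ∧ (p.2 = 1 ∨ (p.1, p.2 - 1) ∈ F)

/-- The Ferrers rook graph: vertices are points of `F`, two distinct points adjacent
iff they share a row or a column. -/
def rookGraph (F : Finset (ℕ × ℕ)) : SimpleGraph {p // p ∈ F} where
  Adj a b := a ≠ b ∧ ((a : ℕ × ℕ).1 = (b : ℕ × ℕ).1 ∨ (a : ℕ × ℕ).2 = (b : ℕ × ℕ).2)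
  symm := ⟨fun a b h => ⟨h.1.symm, h.2.imp Eq.symm Eq.symm⟩⟩
  loopless := ⟨fun a h => h.1 rfl⟩

/-- The set of degrees of positive-rank divisors on `R(F)`; its least element is the gonality. -/
def gonSet (F : Finset (ℕ × ℕ)) : Set ℤ :=
  {d | ∃ D : {p // p ∈ F} → ℤ, PositiveRank (rookGraph F) D ∧ degD D = d}

/-- The divisor `D_{x,y}`: one chip on each vertex not in column `x` and not in row `y`. -/
def Dxy (F : Finset (ℕ × ℕ)) (x y : ℕ) : {p // p ∈ F} → ℤ :=
  fun p => if (p : ℕ × ℕ).1 ≠ x ∧ (p : ℕ × ℕ).2 ≠ y then 1 else 0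

def F3 : Finset (ℕ × ℕ) := {(1, 1), (2, 1), (3, 1), (4, 1), (1, 2), (2, 2), (3, 2), (1, 3)}

/-!
Upper bound: the four chips of `D_{4,2}` can be moved onto `(4,1)` (and `(1,3)`) and onto row 2,
so together with `D_{4,2}` itself every vertex is reached.

Lower bound: adding chips preserves positive rank, so it suffices to rule out degree 3. Chip firing
preserves the degree and the residue of `∑ c v * D v` modulo 931 for any `c` whose Laplacian
vanishes modulo 931. For a suitable such `c`, each of the 109 residues realised by the 120
effective divisors of degree 3 leaves some vertex uncovered by all of them.
-/

section ChipFiring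

open Matrix

variable {V : Type*} [Fintype V] (G : SimpleGraph V)

theorem lap_eq_sum [DecidableRel G.Adj] (f : V → ℤ) (w : V) :
    lap G f w = ∑ u, if G.Adj u w then f u - f w else 0 := by
  simp only [lap, Finset.mul_sum, ← Finset.sum_sub_distrib]
  refine Finset.sum_congr rfl fun u _ => ?_
  split_ifs <;> ring

theorem lap_eq_neg_lapMatrix_mulVec (f : V → ℤ) : lap G f = -(G.lapMatrix ℤ *ᵥ f) := by
  ext w
  rw [lap_eq_sum, Pi.neg_apply, SimpleGraph.lapMatrix_mulVec_apply,
    ← SimpleGraph.card_neighborFinset_eq_degree]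
  simp only [Finset.sum_ite, Finset.sum_const_zero, add_zero, Finset.sum_sub_distrib,
    Finset.sum_const]
  have hnbr : Finset.univ.filter (G.Adj · w) = G.neighborFinset w := by
    ext u
    simp [G.adj_comm]
  rw [hnbr]
  ring

theorem sum_mul_lap_comm (c f : V → ℤ) : ∑ w, c w * lap G f w = ∑ w, f w * lap G c w := by
  simp only [lap_eq_neg_lapMatrix_mulVec, Pi.neg_apply, mul_neg, Finset.sum_neg_distrib]
  change -(c ⬝ᵥ (G.lapMatrix ℤ *ᵥ f)) = -(f ⬝ᵥ (G.lapMatrix ℤ *ᵥ c))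
  rw [dotProduct_mulVec, ← mulVec_transpose, (G.isSymm_lapMatrix ℤ).eq, dotProduct_comm]

theorem lap_const (a : ℤ) : lap G (fun _ => a) = 0 := by
  ext w
  simp only [lap, ← Finset.mul_sum, sub_self, Pi.zero_apply]

theorem sum_lap (f : V → ℤ) : ∑ w, lap G f w = 0 := by
  simpa [lap_const] using sum_mul_lap_comm G (fun _ => 1) f

variable {G} {D D' E : V → ℤ}

theorem LinEquiv.degD_eq (h : LinEquiv G D D') : degD D' = degD D := by
  obtain ⟨f, hf⟩ := h
  simp only [degD, hf, Finset.sum_add_distrib, sum_lap, add_zero]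

theorem LinEquiv.sum_mul_emod_eq {c : V → ℤ} {m : ℤ} (hc : ∀ u, m ∣ lap G c u)
    (h : LinEquiv G D D') : (∑ w, c w * D' w) % m = (∑ w, c w * D w) % m := by
  obtain ⟨f, hf⟩ := h
  obtain ⟨k, hk⟩ : m ∣ ∑ w, f w * lap G c w :=
    Finset.dvd_sum fun w _ => (hc w).mul_left (f w)
  simp only [hf, mul_add, Finset.sum_add_distrib, sum_mul_lap_comm G c f]
  rw [hk, Int.add_mul_emod_self_left]

theorem PositiveRank.add (hD : PositiveRank G D) (hE : Effective E) : PositiveRank G (D + E) := by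
  intro v
  obtain ⟨D', ⟨f, hf⟩, hD', hv⟩ := hD v
  refine ⟨D' + E, ⟨f, fun w => ?_⟩, fun w => add_nonneg (hD' w) (hE w), ?_⟩
  · simp only [Pi.add_apply, hf]; ring
  · simpa using add_pos_of_pos_of_nonneg hv (hE v)

theorem PositiveRank.degD_nonneg [Nonempty V] (hD : PositiveRank G D) : 0 ≤ degD D := by
  obtain ⟨D', hDD', hD', -⟩ := hD (Classical.arbitrary V)
  rw [← hDD'.degD_eq]
  exact Finset.sum_nonneg fun v _ => hD' v

theorem exists_eq_sum_single_of_effective [DecidableEq V] {n : ℕ} (hE : Effective E)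
    (h : degD E = n) : ∃ s : Fin n → V, E = ∑ i, Pi.single (s i) 1 := by
  induction n generalizing E with
  | zero =>
    refine ⟨Fin.elim0, funext fun v => ?_⟩
    simpa using (Finset.sum_eq_zero_iff_of_nonneg fun v _ => hE v).mp h v (Finset.mem_univ v)
  | succ n ih =>
    obtain ⟨v, hv⟩ : ∃ v, 0 < E v := by
      by_contra! hle
      have : degD E = 0 := Finset.sum_eq_zero fun v _ => le_antisymm (hle v) (hE v)
      omega
    have hE' : Effective (E - Pi.single v 1) := fun w => by
      rcases eq_or_ne w v with rfl | hw
      · simp only [Pi.sub_apply, Pi.single_eq_same]; omega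
      · simpa [hw] using hE w
    obtain ⟨s, hs⟩ := ih hE' (by
      rw [show degD (E - Pi.single v 1) = degD E - 1 by simp [degD, Finset.sum_sub_distrib], h]
      push_cast; ring)
    refine ⟨Fin.cons v s, ?_⟩
    simp only [Fin.sum_univ_succ, Fin.cons_zero, Fin.cons_succ, ← hs, add_sub_cancel]

theorem not_positiveRank_of_witness {n : ℕ} {c : V → ℤ} {m : ℤ}
    (hc : ∀ u, m ∣ lap G c u) (w : ℤ → V) (hw : ∀ s : Fin n → V, ∀ i, s i ≠ w ((∑ i, c (s i)) % m))
    (hD : degD D = n) : ¬ PositiveRank G D := by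
  intro hpos
  obtain ⟨E, hDE, hE, hpos⟩ := hpos (w ((∑ v, c v * D v) % m))
  obtain ⟨s, rfl⟩ := exists_eq_sum_single_of_effective hE (hDE.degD_eq.trans hD)
  have hclass : ∑ v, c v * (∑ i, Pi.single (s i) 1 : V → ℤ) v = ∑ i, c (s i) := by
    simp only [Finset.sum_apply, Finset.mul_sum]
    rw [Finset.sum_comm]
    simp [Pi.single_apply]
  rw [← hDE.sum_mul_emod_eq hc, hclass] at hpos
  simp [Finset.sum_apply, (hw s _).symm] at hpos

end ChipFiring

instance (F : Finset (ℕ × ℕ)) : DecidableRel (rookGraph F).Adj := fun a b =>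
  inferInstanceAs (Decidable (a ≠ b ∧ (a.1.1 = b.1.1 ∨ a.1.2 = b.1.2)))

theorem positiveRank_Dxy_F3 : PositiveRank (rookGraph F3) (Dxy F3 4 2) := by
  let scripts : List ({p // p ∈ F3} → ℤ) :=
    [0, fun p => if p.1 = (4, 1) then -1 else 0, fun p => if p.1.2 = 2 then -1 else 0]
  have hscripts : ∀ v, ∃ f ∈ scripts, (∀ w, 0 ≤ Dxy F3 4 2 w + lap (rookGraph F3) f w) ∧
      0 < Dxy F3 4 2 v + lap (rookGraph F3) f v := by
    simp only [lap_eq_sum]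
    decide
  intro v
  obtain ⟨f, -, hf, hv⟩ := hscripts v
  exact ⟨_, ⟨f, fun w => rfl⟩, hf, hv⟩

-- `classF3` vanishes modulo 931 on principal divisors and maps onto `ℤ/931`; as `R(F₃)` has 931
-- spanning trees, it identifies the degree-0 divisor classes with `ℤ/931`.
def classF3 (p : {p // p ∈ F3}) : ℤ :=
  match p.1 with
  | (1, 1) => 703 | (2, 1) => 471 | (3, 1) => 422 | (4, 1) => 532
  | (1, 2) => 228 | (2, 2) => 227 | (3, 2) => 913 | _ => 0

theorem dvd_lap_classF3 (u : {p // p ∈ F3}) : 931 ∣ lap (rookGraph F3) classF3 u := by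
  rw [lap_eq_sum]
  revert u
  decide

def witnessF3 (r : ℤ) : {p // p ∈ F3} :=
  if r ∈ [5, 23, 54, 55, 72, 76, 115, 133, 250, 286, 299, 304, 360, 445, 494, 496, 514, 531, 543,
      555, 604, 665, 726, 741, 759, 775, 836] then ⟨(1, 2), by decide⟩
  else if r ∈ [56, 57, 251, 300, 361, 742, 760] then ⟨(1, 1), by decide⟩
  else if r = 532 then ⟨(2, 1), by decide⟩
  else ⟨(4, 1), by decide⟩

theorem witnessF3_spec : ∀ a b c : {p // p ∈ F3},
    let w := witnessF3 ((classF3 a + classF3 b + classF3 c) % 931)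
    a ≠ w ∧ b ≠ w ∧ c ≠ w := by
  decide

theorem not_positiveRank_F3_of_degD_eq_three {D : {p // p ∈ F3} → ℤ} (hD : degD D = 3) :
    ¬ PositiveRank (rookGraph F3) D := by
  refine not_positiveRank_of_witness (n := 3) dvd_lap_classF3 witnessF3 (fun s i => ?_) hD
  obtain ⟨h0, h1, h2⟩ := witnessF3_spec (s 0) (s 1) (s 2)
  rw [Fin.sum_univ_three]
  fin_cases i <;> assumption

theorem four_le_of_mem_gonSet_F3 {d : ℤ} (hd : d ∈ gonSet F3) : 4 ≤ d := by
  obtain ⟨D, hD, rfl⟩ := hd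
  let v : {p // p ∈ F3} := ⟨(1, 1), by decide⟩
  have : Nonempty {p // p ∈ F3} := ⟨v⟩
  have hdeg := hD.degD_nonneg
  by_contra! h
  have hpad : (0 : {p // p ∈ F3} → ℤ) ≤ Pi.single v (3 - degD D) :=
    Pi.single_nonneg.2 (by omega)
  refine not_positiveRank_F3_of_degD_eq_three (D := D + Pi.single v (3 - degD D)) ?_
    (hD.add fun w => hpad w)
  simp [degD, Finset.sum_add_distrib]

theorem stmt17 : IsLeast (gonSet F3) 4 :=
  ⟨⟨Dxy F3 4 2, positiveRank_Dxy_F3, by decide⟩, fun _ => four_le_of_mem_gonSet_F3⟩
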